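/- arXiv:1205.1789 — 5 statements merged into one kernel-verified Lean document; each statement's English description precedes it below -/
import Mathlib

section
/- Let b ≥ 2 be an integer. The composite decimation map R : (k,m) ↦ (k',m') (defined on [0,∞)×ℝ via the Markov chain correspondence) satisfies, at the fixed point (k,m)=(0,0): the partial derivative of k' with respect to k (taken within k ≥ 0, along m = 0) equals b; the partial derivative of m' with respect to m (along k = 0) equals b; m'(k,0) = 0 for all 0 ≤ k < 1 and k'(0,m) = 0 for all m, so the off-diagonal partial derivatives ∂k'/∂m and ∂m'/∂k at (0,0) are 0. In other words the Jacobian matrix of (k',m') with respect to (k,m) at the fixed point is the diagonal matrix diag(b,b). -/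
/-- Transition probability `p = (S + sinh m)/(cosh m + S)` with `S = sqrt(sinh² m + k²)`. -/
noncomputable def pIsing (k m : ℝ) : ℝ :=
  (Real.sqrt (Real.sinh m ^ 2 + k ^ 2) + Real.sinh m) /
    (Real.cosh m + Real.sqrt (Real.sinh m ^ 2 + k ^ 2))

/-- Transition probability `q = (S − sinh m)/(cosh m + S)` with `S = sqrt(sinh² m + k²)`. -/
noncomputable def qIsing (k m : ℝ) : ℝ :=
  (Real.sqrt (Real.sinh m ^ 2 + k ^ 2) - Real.sinh m) /
    (Real.cosh m + Real.sqrt (Real.sinh m ^ 2 + k ^ 2))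

/-- Renormalized transition probability `p' = (p/(p+q)) (1 − (1−p−q)^b)`. -/
noncomputable def pRen (b : ℕ) (k m : ℝ) : ℝ :=
  (pIsing k m / (pIsing k m + qIsing k m)) * (1 - (1 - pIsing k m - qIsing k m) ^ b)

/-- Renormalized transition probability `q' = (q/(p+q)) (1 − (1−p−q)^b)`. -/
noncomputable def qRen (b : ℕ) (k m : ℝ) : ℝ :=
  (qIsing k m / (pIsing k m + qIsing k m)) * (1 - (1 - pIsing k m - qIsing k m) ^ b)

/-- Renormalized Boltzmann factor `k' = sqrt(p'q'/((1−p')(1−q')))`. -/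
noncomputable def kRen (b : ℕ) (k m : ℝ) : ℝ :=
  Real.sqrt (pRen b k m * qRen b k m / ((1 - pRen b k m) * (1 - qRen b k m)))

/-- Renormalized magnetic field `m' = (1/2) log((1−q')/(1−p'))`. -/
noncomputable def mRen (b : ℕ) (k m : ℝ) : ℝ :=
  (1 / 2) * Real.log ((1 - qRen b k m) / (1 - pRen b k m))

/-!
Reflecting the field, `m ↦ -m`, swaps `p` and `q`, hence `p'` and `q'`, so `m'` is odd in `m`
and vanishes on the line `m = 0`. On the line `k = 0` we have `S = |sinh m|`: then
`p q = k² / (cosh m + S)² = 0`, so `k' = 0`, and for `m ≥ 0` also `q = 0` and `1 - p = e^{-2m}`,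
which gives `1 - p' = e^{-2bm}` and `m' = b m` exactly. On the line `m = 0` we have
`p = q = k / (1 + k)`, and `k'` obeys the classical decimation law `tanh J' = (tanh J)^b`, where
`tanh J = (1 - k) / (1 + k)`; its slope at `k = 0` is `b`.
-/

open Real

lemma mul_mem_Ioc_neg_one_one {x y : ℝ} (hx : x ∈ Set.Ioc (-1) 1) (hy : y ∈ Set.Ioc (-1) 1) :
    x * y ∈ Set.Ioc (-1) 1 := by
  obtain ⟨hx₀, hx₁⟩ := hx
  obtain ⟨hy₀, hy₁⟩ := hy
  constructor <;> nlinarith [mul_pos (neg_lt_iff_pos_add.1 hx₀) (neg_lt_iff_pos_add.1 hy₀)]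

lemma pow_mem_Ioc_neg_one_one {x : ℝ} (hx : x ∈ Set.Ioc (-1) 1) (n : ℕ) :
    x ^ n ∈ Set.Ioc (-1) 1 := by
  induction n with
  | zero => norm_num
  | succ n ih => simpa only [pow_succ] using mul_mem_Ioc_neg_one_one ih hx

section Decimation

variable (b : ℕ) (k m : ℝ)

lemma pIsing_neg : pIsing k (-m) = qIsing k m := by
  simp only [pIsing, qIsing, sinh_neg, cosh_neg, neg_sq]
  ring

lemma qIsing_neg : qIsing k (-m) = pIsing k m := by
  simpa using (pIsing_neg k (-m)).symm

lemma pRen_neg : pRen b k (-m) = qRen b k m := by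
  simp only [pRen, qRen, pIsing_neg, qIsing_neg]
  ring

lemma qRen_neg : qRen b k (-m) = pRen b k m := by
  simpa using (pRen_neg b k (-m)).symm

lemma mRen_neg : mRen b k (-m) = -mRen b k m := by
  rw [mRen, mRen, pRen_neg, qRen_neg, ← inv_div (1 - qRen b k m), log_inv]
  ring

lemma mRen_field_zero : mRen b k 0 = 0 := by
  have h := mRen_neg b k 0
  rw [neg_zero] at h
  linarith

lemma pIsing_mul_qIsing :
    pIsing k m * qIsing k m = k ^ 2 / (cosh m + √(sinh m ^ 2 + k ^ 2)) ^ 2 := by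
  have hS := sq_sqrt (add_nonneg (sq_nonneg (sinh m)) (sq_nonneg k))
  rw [pIsing, qIsing, div_mul_div_comm, ← sq]
  congr 1
  linear_combination hS

lemma pRen_mul_qRen :
    pRen b k m * qRen b k m = pIsing k m * qIsing k m *
      ((1 - (1 - pIsing k m - qIsing k m) ^ b) / (pIsing k m + qIsing k m)) ^ 2 := by
  unfold pRen qRen
  ring

lemma kRen_boltzmann_zero : kRen b 0 m = 0 := by
  have h : pRen b 0 m * qRen b 0 m = 0 := by
    rw [pRen_mul_qRen, pIsing_mul_qIsing]
    simp
  rw [kRen, h, zero_div, sqrt_zero]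

lemma pRen_of_qIsing_eq_zero (h : qIsing k m = 0) : pRen b k m = 1 - (1 - pIsing k m) ^ b := by
  rcases eq_or_ne (pIsing k m) 0 with hp | hp
  · simp [pRen, hp, h]
  · rw [pRen, h, add_zero, sub_zero, div_self hp, one_mul]

lemma qRen_of_qIsing_eq_zero (h : qIsing k m = 0) : qRen b k m = 0 := by
  simp [qRen, h]

variable {m} in
lemma qIsing_boltzmann_zero (hm : 0 ≤ m) : qIsing 0 m = 0 := by
  rw [qIsing, zero_pow two_ne_zero, add_zero, sqrt_sq (sinh_nonneg_iff.2 hm), sub_self, zero_div]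

variable {m} in
lemma one_sub_pIsing_boltzmann_zero (hm : 0 ≤ m) : 1 - pIsing 0 m = exp (-(2 * m)) := by
  have hexp : exp (-(2 * m)) * exp m = exp (-m) := by
    rw [← exp_add]
    ring_nf
  rw [pIsing, zero_pow two_ne_zero, add_zero, sqrt_sq (sinh_nonneg_iff.2 hm), cosh_add_sinh]
  field_simp
  linear_combination -hexp - 2 * sinh_eq m

variable {m} in
lemma mRen_boltzmann_zero_of_nonneg (hm : 0 ≤ m) : mRen b 0 m = b * m := by
  rw [mRen, qRen_of_qIsing_eq_zero b 0 m (qIsing_boltzmann_zero hm),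
    pRen_of_qIsing_eq_zero b 0 m (qIsing_boltzmann_zero hm), one_sub_pIsing_boltzmann_zero hm,
    sub_sub_cancel, sub_zero, ← exp_nat_mul, one_div (exp _), ← exp_neg, log_exp]
  ring

lemma mRen_boltzmann_zero : mRen b 0 m = b * m := by
  rcases le_total 0 m with hm | hm
  · exact mRen_boltzmann_zero_of_nonneg b hm
  · have h := mRen_boltzmann_zero_of_nonneg b (neg_nonneg.2 hm)
    rw [mRen_neg] at h
    linarith

lemma pRen_of_pIsing_eq_qIsing (h : pIsing k m = qIsing k m) :
    pRen b k m = (1 - (1 - 2 * pIsing k m) ^ b) / 2 := by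
  rcases eq_or_ne (pIsing k m) 0 with hp | hp
  · simp [pRen, ← h, hp]
  · rw [pRen, ← h]
    field_simp
    ring

variable {k} in
lemma pIsing_field_zero (hk : 0 ≤ k) : pIsing k 0 = k / (1 + k) := by
  simp [pIsing, sqrt_sq hk]

variable {k} in
lemma kRen_field_zero (hk : 0 ≤ k) :
    kRen b k 0 = (1 - ((1 - k) / (1 + k)) ^ b) / (1 + ((1 - k) / (1 + k)) ^ b) := by
  have hpq : pIsing k 0 = qIsing k 0 := by simpa using pIsing_neg k 0
  have hqr : qRen b k 0 = pRen b k 0 := by simpa using (pRen_neg b k 0).symm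
  set t := ((1 - k) / (1 + k)) ^ b
  have hpr : pRen b k 0 = (1 - t) / 2 := by
    rw [pRen_of_pIsing_eq_qIsing b k 0 hpq, pIsing_field_zero hk]
    congr 3
    field_simp
    ring
  have hk₁ : 0 < 1 + k := by linarith
  obtain ⟨ht₀, ht₁⟩ : t ∈ Set.Ioc (-1) 1 := by
    refine pow_mem_Ioc_neg_one_one ⟨?_, ?_⟩ b
    · rw [lt_div_iff₀ hk₁]
      linarith
    · rw [div_le_one hk₁]
      linarith
  have hsq : (1 - t) / 2 * ((1 - t) / 2) / ((1 - (1 - t) / 2) * (1 - (1 - t) / 2))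
      = ((1 - t) / (1 + t)) ^ 2 := by
    field_simp
    ring
  rw [kRen, hqr, hpr, hsq, sqrt_sq (div_nonneg (by linarith) (by linarith))]

lemma hasDerivAt_decimationLaw :
    HasDerivAt (fun k : ℝ => (1 - ((1 - k) / (1 + k)) ^ b) / (1 + ((1 - k) / (1 + k)) ^ b))
      b 0 := by
  have hs : HasDerivAt (fun k : ℝ => (1 - k) / (1 + k)) (-2) 0 := by
    have h := ((hasDerivAt_id' (0 : ℝ)).const_sub 1).div ((hasDerivAt_id' (0 : ℝ)).const_add 1)
      (by norm_num)
    exact h.congr_deriv (by norm_num)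
  have ht := hs.pow b
  have h := (ht.const_sub 1).div (ht.const_add 1) (by norm_num)
  exact h.congr_deriv (by norm_num; ring)

end Decimation

theorem universality_fixed_point_general (b : ℕ) :
    HasDerivWithinAt (fun k : ℝ => kRen b k 0) (b : ℝ) (Set.Ici 0) 0 ∧
    HasDerivAt (fun m : ℝ => mRen b 0 m) (b : ℝ) 0 ∧
    (∀ k : ℝ, 0 ≤ k → k < 1 → mRen b k 0 = 0) ∧
    (∀ m : ℝ, kRen b 0 m = 0) ∧
    HasDerivWithinAt (fun k : ℝ => mRen b k 0) 0 (Set.Ici 0) 0 ∧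
    HasDerivAt (fun m : ℝ => kRen b 0 m) 0 0 := by
  refine ⟨?_, ?_, fun k _ _ => mRen_field_zero b k, kRen_boltzmann_zero b, ?_, ?_⟩
  · exact (hasDerivAt_decimationLaw b).hasDerivWithinAt.congr
      (fun k hk => kRen_field_zero b hk) (kRen_field_zero b le_rfl)
  · simpa only [mRen_boltzmann_zero, mul_one] using (hasDerivAt_id' 0).const_mul (b : ℝ)
  · simpa only [mRen_field_zero] using hasDerivWithinAt_const (0 : ℝ) (Set.Ici 0) (0 : ℝ)
  · simpa only [kRen_boltzmann_zero] using hasDerivAt_const (0 : ℝ) (0 : ℝ)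

/-- **Universality conjecture at the fixed point.**  For the decimation map
`R : (k,m) ↦ (k',m')` with blocking factor `b ≥ 2`, at the fixed point `(0,0)`:
`∂k'/∂k = b` (within `k ≥ 0`, along `m = 0`), `∂m'/∂m = b` (along `k = 0`),
`m'(k,0) = 0` for `0 ≤ k < 1` and `k'(0,m) = 0` for all `m`, so the off-diagonal
partials vanish; i.e. the Jacobian of `R` at `(0,0)` is `diag(b,b)`. -/
theorem universality_fixed_point (b : ℕ) (hb : 2 ≤ b) :
    HasDerivWithinAt (fun k : ℝ => kRen b k 0) (b : ℝ) (Set.Ici 0) 0 ∧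
    HasDerivAt (fun m : ℝ => mRen b 0 m) (b : ℝ) 0 ∧
    (∀ k : ℝ, 0 ≤ k → k < 1 → mRen b k 0 = 0) ∧
    (∀ m : ℝ, kRen b 0 m = 0) ∧
    HasDerivWithinAt (fun k : ℝ => mRen b k 0) 0 (Set.Ici 0) 0 ∧
    HasDerivAt (fun m : ℝ => kRen b 0 m) 0 0 :=
  universality_fixed_point_general b
end

section
/- Let b ≥ 2 be an integer. On the m = 0 axis the decimation map stays on that axis and its derivative at the fixed point equals b: for 0 ≤ k < 1 one has p(k,0) = q(k,0) = k/(1+k), hence p'(k,0) = q'(k,0) = (1/2)(1 − ((1−k)/(1+k))^b), so that m'(k,0) = 0 and k'(k,0) = p'/(1−p'); moreover the function k ↦ k'(k,0) (defined on [0,1), equal to 0 at k=0) has derivative b at k = 0 (derivative within [0,1)). -/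
/-!
At `m = 0` both transition probabilities equal `k / (1 + k)`, so `p' = q'`; this forces `m' = 0`
and turns `k'` into `p' / (1 - p')`. With `t = (1 - k) / (1 + k)` one has `p' = (1 - t ^ b) / 2`,
which vanishes at `k = 0` with slope `b` because `t'(0) = -2`, and `u ↦ u / (1 - u)` has slope `1`
at `u = 0`.
-/

section

variable (b : ℕ)

lemma pIsing_zero {k : ℝ} (hk : 0 ≤ k) : pIsing k 0 = k / (1 + k) := by
  simp [pIsing, Real.sqrt_sq hk]

lemma qIsing_zero_eq_pIsing_zero (k : ℝ) : qIsing k 0 = pIsing k 0 := by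
  simp [qIsing, pIsing]

lemma qIsing_zero {k : ℝ} (hk : 0 ≤ k) : qIsing k 0 = k / (1 + k) := by
  rw [qIsing_zero_eq_pIsing_zero, pIsing_zero hk]

lemma qRen_zero_eq_pRen_zero (k : ℝ) : qRen b k 0 = pRen b k 0 := by
  rw [qRen, pRen, qIsing_zero_eq_pIsing_zero]

/-- The factor `p / (p + p)` is the junk value `0` at `p = 0`, where the other factor vanishes. -/
lemma div_add_self_mul_one_sub_pow (p : ℝ) :
    p / (p + p) * (1 - (1 - p - p) ^ b) = 1 / 2 * (1 - (1 - 2 * p) ^ b) := by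
  rcases eq_or_ne p 0 with rfl | hp
  · simp
  · rw [← two_mul, div_mul_cancel_right₀ hp, two_mul, sub_sub, ← two_mul, one_div]

lemma pRen_zero {k : ℝ} (hk : 0 ≤ k) : pRen b k 0 = 1 / 2 * (1 - ((1 - k) / (1 + k)) ^ b) := by
  have hk' : 1 + k ≠ 0 := by positivity
  rw [pRen, qIsing_zero_eq_pIsing_zero, div_add_self_mul_one_sub_pow, pIsing_zero hk]
  congr 3
  field_simp
  ring

lemma mRen_zero (k : ℝ) : mRen b k 0 = 0 := by
  rw [mRen, qRen_zero_eq_pRen_zero]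
  rcases eq_or_ne (1 - pRen b k 0) 0 with h | h <;> simp [h]

lemma sqrt_mul_self_div_one_sub_mul_self {x : ℝ} (hx₀ : 0 ≤ x) (hx₁ : x ≤ 1) :
    Real.sqrt (x * x / ((1 - x) * (1 - x))) = x / (1 - x) := by
  rw [← div_mul_div_comm, Real.sqrt_mul_self (div_nonneg hx₀ (sub_nonneg.2 hx₁))]

lemma pRen_zero_mem_Icc {k : ℝ} (hk : 0 ≤ k) : pRen b k 0 ∈ Set.Icc 0 1 := by
  have ht : |(1 - k) / (1 + k)| ≤ 1 := by
    rw [abs_div, div_le_one (by positivity), abs_of_pos (by positivity : 0 < 1 + k)]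
    exact abs_le.2 ⟨by linarith, by linarith⟩
  have htb := abs_le.1 (abs_pow ((1 - k) / (1 + k)) b ▸ pow_le_one₀ (abs_nonneg _) ht)
  rw [pRen_zero b hk]
  constructor <;> linarith [htb.1, htb.2]

lemma kRen_zero {k : ℝ} (hk : 0 ≤ k) : kRen b k 0 = pRen b k 0 / (1 - pRen b k 0) := by
  obtain ⟨h₀, h₁⟩ := pRen_zero_mem_Icc b hk
  rw [kRen, qRen_zero_eq_pRen_zero, sqrt_mul_self_div_one_sub_mul_self h₀ h₁]

lemma HasDerivAt.div_one_sub {f : ℝ → ℝ} {f' x : ℝ} (hf : HasDerivAt f f' x) (hfx : f x = 0) :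
    HasDerivAt (fun y => f y / (1 - f y)) f' x := by
  refine (hf.fun_div ((hasDerivAt_const x 1).sub hf) (by simp [hfx])).congr_deriv ?_
  simp [hfx]

lemma hasDerivAt_half_one_sub_pow_zero :
    HasDerivAt (fun k : ℝ => 1 / 2 * (1 - ((1 - k) / (1 + k)) ^ b)) b 0 := by
  have ht : HasDerivAt (fun k : ℝ => (1 - k) / (1 + k)) (-2) 0 := by
    refine (((hasDerivAt_id' 0).const_sub 1).fun_div ((hasDerivAt_id' 0).const_add 1)
      (by norm_num)).congr_deriv ?_
    norm_num
  refine (((ht.fun_pow b).const_sub 1).const_mul (1 / 2 : ℝ)).congr_deriv ?_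
  norm_num
  ring

lemma hasDerivWithinAt_kRen_zero :
    HasDerivWithinAt (fun k => kRen b k 0) b (Set.Ici 0) 0 := by
  refine ((hasDerivAt_half_one_sub_pow_zero b).div_one_sub (by simp)).hasDerivWithinAt.congr_of_mem
    (fun k hk => ?_) Set.self_mem_Ici
  rw [kRen_zero b hk, pRen_zero b hk]

end

theorem decimation_on_m_axis_general (b : ℕ) :
    (∀ k : ℝ, 0 ≤ k → k < 1 →
      pIsing k 0 = k / (1 + k) ∧ qIsing k 0 = k / (1 + k) ∧
      pRen b k 0 = (1 / 2) * (1 - ((1 - k) / (1 + k)) ^ b) ∧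
      qRen b k 0 = (1 / 2) * (1 - ((1 - k) / (1 + k)) ^ b) ∧
      mRen b k 0 = 0 ∧
      kRen b k 0 = pRen b k 0 / (1 - pRen b k 0)) ∧
    HasDerivWithinAt (fun k : ℝ => kRen b k 0) (b : ℝ) (Set.Ico 0 1) 0 := by
  refine ⟨fun k hk _ => ⟨pIsing_zero hk, qIsing_zero hk, pRen_zero b hk, ?_, mRen_zero b k,
    kRen_zero b hk⟩, (hasDerivWithinAt_kRen_zero b).mono Set.Ico_subset_Ici_self⟩
  rw [qRen_zero_eq_pRen_zero, pRen_zero b hk]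

/-- **Decimation on the `m = 0` axis.**  For blocking factor `b ≥ 2` and `0 ≤ k < 1`:
`p(k,0) = q(k,0) = k/(1+k)`, hence `p'(k,0) = q'(k,0) = (1/2)(1 − ((1−k)/(1+k))^b)`,
so `m'(k,0) = 0` and `k'(k,0) = p'/(1−p')`; moreover `k ↦ k'(k,0)` has derivative `b`
at `k = 0` within `[0,1)`. -/
theorem decimation_on_m_axis (b : ℕ) (hb : 2 ≤ b) :
    (∀ k : ℝ, 0 ≤ k → k < 1 →
      pIsing k 0 = k / (1 + k) ∧ qIsing k 0 = k / (1 + k) ∧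
      pRen b k 0 = (1 / 2) * (1 - ((1 - k) / (1 + k)) ^ b) ∧
      qRen b k 0 = (1 / 2) * (1 - ((1 - k) / (1 + k)) ^ b) ∧
      mRen b k 0 = 0 ∧
      kRen b k 0 = pRen b k 0 / (1 - pRen b k 0)) ∧
    HasDerivWithinAt (fun k : ℝ => kRen b k 0) (b : ℝ) (Set.Ico 0 1) 0 :=
  decimation_on_m_axis_general b
end

section
/- For every k > 0 and m ∈ ℝ, the transition probabilities p and q associated to the Ising Hamiltonian satisfy 0 < p < 1, 0 < q < 1, and the inversion identities pq/((1 − p)(1 − q)) = k² and (1/2)·log((1 − q)/(1 − p)) = m; that is, k = sqrt(pq/((1−p)(1−q))) and m = (1/2)log((1−q)/(1−p)). -/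
/-- **Inversion identities.**  For every `k > 0` and `m ∈ ℝ`, the transition
probabilities `p` and `q` satisfy `0 < p < 1`, `0 < q < 1`,
`pq/((1−p)(1−q)) = k²` and `(1/2) log((1−q)/(1−p)) = m`; equivalently
`k = sqrt(pq/((1−p)(1−q)))` and `m = (1/2) log((1−q)/(1−p))`. -/
theorem ising_inversion (k m : ℝ) (hk : 0 < k) :
    0 < pIsing k m ∧ pIsing k m < 1 ∧ 0 < qIsing k m ∧ qIsing k m < 1 ∧
    pIsing k m * qIsing k m / ((1 - pIsing k m) * (1 - qIsing k m)) = k ^ 2 ∧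
    (1 / 2) * Real.log ((1 - qIsing k m) / (1 - pIsing k m)) = m ∧
    k = Real.sqrt (pIsing k m * qIsing k m / ((1 - pIsing k m) * (1 - qIsing k m))) := by
  set s := Real.sinh m with hs
  set c := Real.cosh m with hc
  set S := Real.sqrt (s ^ 2 + k ^ 2) with hS
  have hS2 : S ^ 2 = s ^ 2 + k ^ 2 :=
    Real.sq_sqrt (by positivity)
  have habs : |s| < S := by
    have : |s| = Real.sqrt (s ^ 2) := (Real.sqrt_sq_eq_abs s).symm
    rw [this, hS]
    exact Real.sqrt_lt_sqrt (by positivity) (by nlinarith)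
  have h1 : -S < s := (abs_lt.mp habs).1
  have h2 : s < S := (abs_lt.mp habs).2
  have hcpos : 0 < c := Real.cosh_pos m
  have hcs : c ^ 2 - s ^ 2 = 1 := by
    have := Real.cosh_sq_sub_sinh_sq m; nlinarith [this]
  have hden : 0 < c + S := by nlinarith [Real.sqrt_nonneg (s ^ 2 + k ^ 2)]
  have hcsub : 0 < c - s := by nlinarith
  have hcadd : 0 < c + s := by nlinarith
  have hne : c + S ≠ 0 := hden.ne'
  have hne2 : c - s ≠ 0 := hcsub.ne'
  have hp : pIsing k m = (S + s) / (c + S) := rfl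
  have hq : qIsing k m = (S - s) / (c + S) := rfl
  have h1p : 1 - pIsing k m = (c - s) / (c + S) := by
    rw [hp]; field_simp; ring
  have h1q : 1 - qIsing k m = (c + s) / (c + S) := by
    rw [hq]; field_simp; ring
  have hppos : 0 < pIsing k m := by exact div_pos (by linarith) hden
  have hqpos : 0 < qIsing k m := by rw [hq]; exact div_pos (by linarith) hden
  have hplt : pIsing k m < 1 := by
    have : 0 < 1 - pIsing k m := by rw [h1p]; positivity
    linarith
  have hqlt : qIsing k m < 1 := by
    have : 0 < 1 - qIsing k m := by rw [h1q]; positivity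
    linarith
  have hratio : pIsing k m * qIsing k m / ((1 - pIsing k m) * (1 - qIsing k m)) = k ^ 2 := by
    rw [h1p, h1q, hp, hq]
    field_simp
    nlinarith
  have hlogarg : (1 - qIsing k m) / (1 - pIsing k m) = Real.exp (2 * m) := by
    have key : (c + s) / (c + S) / ((c - s) / (c + S)) = (c + s) / (c - s) := by
      rw [div_div_div_comm, div_self hne, div_one]
    rw [h1p, h1q, key]
    have hce : c + s = Real.exp m := by
      rw [hc, hs, Real.cosh_eq, Real.sinh_eq]; ring
    have hcm : c - s = Real.exp (-m) := by
      rw [hc, hs, Real.cosh_eq, Real.sinh_eq]; ring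
    rw [hce, hcm, ← Real.exp_sub]; ring_nf
  have hlog : (1 / 2) * Real.log ((1 - qIsing k m) / (1 - pIsing k m)) = m := by
    rw [hlogarg, Real.log_exp]; ring
  refine ⟨hppos, hplt, hqpos, hqlt, hratio, hlog, ?_⟩
  rw [hratio, Real.sqrt_sq hk.le]
end

section
/- The map (k,m) ↦ (p,q), where p = (S + sinh m)/(cosh m + S), q = (S − sinh m)/(cosh m + S) and S = sqrt(sinh²m + k²), is a bijection from (0,∞) × ℝ onto (0,1) × (0,1), with inverse given by k = sqrt(pq/((1−p)(1−q))) and m = (1/2)·log((1−q)/(1−p)). -/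
open Real Set

noncomputable def sIsing (k m : ℝ) : ℝ :=
  √(sinh m ^ 2 + k ^ 2)

noncomputable def kIsing (p q : ℝ) : ℝ :=
  √(p * q / ((1 - p) * (1 - q)))

noncomputable def mIsing (p q : ℝ) : ℝ :=
  1 / 2 * log ((1 - q) / (1 - p))

section Forward

variable {k m : ℝ}

lemma pIsing_eq (k m : ℝ) : pIsing k m = (sIsing k m + sinh m) / (cosh m + sIsing k m) := rfl

lemma qIsing_eq (k m : ℝ) : qIsing k m = (sIsing k m - sinh m) / (cosh m + sIsing k m) := rfl

lemma sIsing_sq (k m : ℝ) : sIsing k m ^ 2 = sinh m ^ 2 + k ^ 2 :=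
  sq_sqrt (by positivity)

lemma abs_sinh_lt_sIsing (hk : k ≠ 0) : |sinh m| < sIsing k m :=
  lt_sqrt_of_sq_lt (by rw [sq_abs]; exact lt_add_of_pos_right _ (by positivity))

lemma cosh_add_sIsing_pos (k m : ℝ) : 0 < cosh m + sIsing k m :=
  add_pos_of_pos_of_nonneg (cosh_pos m) (sqrt_nonneg _)

lemma one_sub_pIsing (k m : ℝ) : 1 - pIsing k m = exp (-m) / (cosh m + sIsing k m) := by
  have := (cosh_add_sIsing_pos k m).ne'
  rw [pIsing_eq, ← cosh_sub_sinh]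
  field_simp
  ring

lemma one_sub_qIsing (k m : ℝ) : 1 - qIsing k m = exp m / (cosh m + sIsing k m) := by
  have := (cosh_add_sIsing_pos k m).ne'
  rw [qIsing_eq, ← cosh_add_sinh]
  field_simp
  ring

lemma pIsing_mem_Ioo (hk : k ≠ 0) : pIsing k m ∈ Ioo 0 1 := by
  have hD := cosh_add_sIsing_pos k m
  constructor
  · rw [pIsing_eq]
    exact div_pos (neg_lt_iff_pos_add'.1 (abs_lt.1 (abs_sinh_lt_sIsing hk)).1) hD
  · exact sub_pos.1 (one_sub_pIsing k m ▸ div_pos (exp_pos (-m)) hD)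

lemma qIsing_mem_Ioo (hk : k ≠ 0) : qIsing k m ∈ Ioo 0 1 := by
  have hD := cosh_add_sIsing_pos k m
  constructor
  · rw [qIsing_eq]
    exact div_pos (sub_pos.2 (abs_lt.1 (abs_sinh_lt_sIsing hk)).2) hD
  · exact sub_pos.1 (one_sub_qIsing k m ▸ div_pos (exp_pos m) hD)

lemma kIsing_pIsing_qIsing (hk : 0 ≤ k) : kIsing (pIsing k m) (qIsing k m) = k := by
  have hD := (cosh_add_sIsing_pos k m).ne'
  have hodds : pIsing k m * qIsing k m / ((1 - pIsing k m) * (1 - qIsing k m)) = k ^ 2 := by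
    rw [one_sub_pIsing, one_sub_qIsing, pIsing_eq, qIsing_eq, div_mul_div_comm (exp _), ← exp_add,
      neg_add_cancel, exp_zero]
    field_simp
    linear_combination sIsing_sq k m
  rw [kIsing, hodds, sqrt_sq hk]

lemma mIsing_pIsing_qIsing (k m : ℝ) : mIsing (pIsing k m) (qIsing k m) = m := by
  have hD := (cosh_add_sIsing_pos k m).ne'
  rw [mIsing, one_sub_pIsing, one_sub_qIsing, div_div_div_cancel_right₀ hD, ← exp_sub, log_exp]
  ring

end Forward

section Inverse

variable {p q : ℝ}

lemma kIsing_pos (hp : p ∈ Ioo 0 1) (hq : q ∈ Ioo 0 1) : 0 < kIsing p q :=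
  sqrt_pos.2 (div_pos (mul_pos hp.1 hq.1) (mul_pos (sub_pos.2 hp.2) (sub_pos.2 hq.2)))

lemma mIsing_eq_log (hp : p < 1) (hq : q < 1) : mIsing p q = log (√(1 - q) / √(1 - p)) := by
  rw [← sqrt_div' _ (sub_pos.2 hp).le, log_sqrt (div_pos (sub_pos.2 hq) (sub_pos.2 hp)).le,
    mIsing]
  ring

lemma sinh_mIsing (hp : p < 1) (hq : q < 1) :
    sinh (mIsing p q) = (p - q) / (2 * √(1 - p) * √(1 - q)) := by
  have hu := sqrt_pos.2 (sub_pos.2 hp)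
  have hv := sqrt_pos.2 (sub_pos.2 hq)
  rw [mIsing_eq_log hp hq, sinh_log (div_pos hv hu)]
  field_simp
  linear_combination sq_sqrt (sub_pos.2 hq).le - sq_sqrt (sub_pos.2 hp).le

lemma cosh_mIsing (hp : p < 1) (hq : q < 1) :
    cosh (mIsing p q) = (2 - p - q) / (2 * √(1 - p) * √(1 - q)) := by
  have hu := sqrt_pos.2 (sub_pos.2 hp)
  have hv := sqrt_pos.2 (sub_pos.2 hq)
  rw [mIsing_eq_log hp hq, cosh_log (div_pos hv hu)]
  field_simp
  linear_combination sq_sqrt (sub_pos.2 hq).le + sq_sqrt (sub_pos.2 hp).le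

lemma sIsing_kIsing_mIsing (hp : p ∈ Ico 0 1) (hq : q ∈ Ico 0 1) :
    sIsing (kIsing p q) (mIsing p q) = (p + q) / (2 * √(1 - p) * √(1 - q)) := by
  have hp1 := sub_pos.2 hp.2
  have hq1 := sub_pos.2 hq.2
  have hu := sqrt_pos.2 hp1
  have hv := sqrt_pos.2 hq1
  have hk : kIsing p q ^ 2 = p * q / ((1 - p) * (1 - q)) :=
    sq_sqrt (div_nonneg (mul_nonneg hp.1 hq.1) (mul_pos hp1 hq1).le)
  rw [← sq_sqrt hp1.le, ← sq_sqrt hq1.le] at hk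
  rw [sIsing, sqrt_eq_iff_eq_sq (by positivity) (div_nonneg (add_nonneg hp.1 hq.1) (by positivity)),
    sinh_mIsing hp.2 hq.2, hk]
  field_simp
  ring

lemma pIsing_kIsing_mIsing (hp : p ∈ Ico 0 1) (hq : q ∈ Ico 0 1) :
    pIsing (kIsing p q) (mIsing p q) = p := by
  have hu := (sqrt_pos.2 (sub_pos.2 hp.2)).ne'
  have hv := (sqrt_pos.2 (sub_pos.2 hq.2)).ne'
  rw [pIsing_eq, sIsing_kIsing_mIsing hp hq, sinh_mIsing hp.2 hq.2, cosh_mIsing hp.2 hq.2]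
  field_simp
  ring

lemma qIsing_kIsing_mIsing (hp : p ∈ Ico 0 1) (hq : q ∈ Ico 0 1) :
    qIsing (kIsing p q) (mIsing p q) = q := by
  have hu := (sqrt_pos.2 (sub_pos.2 hp.2)).ne'
  have hv := (sqrt_pos.2 (sub_pos.2 hq.2)).ne'
  rw [qIsing_eq, sIsing_kIsing_mIsing hp hq, sinh_mIsing hp.2 hq.2, cosh_mIsing hp.2 hq.2]
  field_simp
  ring

end Inverse

/-- **Markov–Gibbs correspondence as a bijection.**  The map `(k,m) ↦ (p,q)` is a
bijection from `(0,∞) × ℝ` onto `(0,1) × (0,1)`, with inverse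
`(p,q) ↦ (sqrt(pq/((1−p)(1−q))), (1/2) log((1−q)/(1−p)))`. -/
theorem ising_markov_bijection :
    Set.BijOn (fun km : ℝ × ℝ => (pIsing km.1 km.2, qIsing km.1 km.2))
      (Set.Ioi 0 ×ˢ Set.univ) (Set.Ioo 0 1 ×ˢ Set.Ioo 0 1) ∧
    Set.InvOn
      (fun pq : ℝ × ℝ =>
        (Real.sqrt (pq.1 * pq.2 / ((1 - pq.1) * (1 - pq.2))),
         (1 / 2) * Real.log ((1 - pq.2) / (1 - pq.1))))
      (fun km : ℝ × ℝ => (pIsing km.1 km.2, qIsing km.1 km.2))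
      (Set.Ioi 0 ×ˢ Set.univ) (Set.Ioo 0 1 ×ˢ Set.Ioo 0 1) := by
  have invOn : InvOn (fun pq : ℝ × ℝ => (kIsing pq.1 pq.2, mIsing pq.1 pq.2))
      (fun km : ℝ × ℝ => (pIsing km.1 km.2, qIsing km.1 km.2))
      (Ioi 0 ×ˢ univ) (Ioo 0 1 ×ˢ Ioo 0 1) := by
    constructor
    · rintro ⟨k, m⟩ ⟨hk, -⟩
      exact Prod.ext (kIsing_pIsing_qIsing (le_of_lt hk)) (mIsing_pIsing_qIsing k m)
    · rintro ⟨p, q⟩ ⟨hp, hq⟩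
      have hp' := Ioo_subset_Ico_self hp
      have hq' := Ioo_subset_Ico_self hq
      exact Prod.ext (pIsing_kIsing_mIsing hp' hq') (qIsing_kIsing_mIsing hp' hq')
  refine ⟨invOn.bijOn ?_ ?_, invOn⟩
  · rintro ⟨k, m⟩ ⟨hk, -⟩
    exact ⟨pIsing_mem_Ioo (ne_of_gt hk), qIsing_mem_Ioo (ne_of_gt hk)⟩
  · rintro ⟨p, q⟩ ⟨hp, hq⟩
    exact ⟨kIsing_pos hp hq, mem_univ _⟩
end

section
/- Let b ≥ 2 be an integer. The real function φ defined for 0 ≤ k < 1 by φ(k) = p'/(1 − p'), where p' = (1/2)·(1 − ((1−k)/(1+k))^b), satisfies φ(0) = 0 and has derivative b at k = 0 (derivative within [0,1)). Equivalently, the composite map k ↦ p = k/(1+k) ↦ p' = (1/2)(1 − (1−2p)^b) ↦ k' = p'/(1−p') carries the fixed point 0 to 0 with derivative equal to the blocking factor b. -/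
/-!
The map factors as `k ↦ p' ↦ p' / (1 - p')`. Since `(1 - k) / (1 + k)` equals `1` at `0` with
derivative `-2`, the decimated flip probability `p' = (1 - ((1 - k) / (1 + k)) ^ b) / 2` vanishes
at `0` with derivative `b`, and `x ↦ x / (1 - x)` fixes `0` with derivative `1`.
-/

theorem one_sub_two_mul_div_one_add {K : Type*} [Field K] {k : K} (hk : 1 + k ≠ 0) :
    1 - 2 * (k / (1 + k)) = (1 - k) / (1 + k) := by
  field_simp
  ring

theorem hasDerivAt_one_sub_div_one_add_zero :
    HasDerivAt (fun k : ℝ => (1 - k) / (1 + k)) (-2) 0 :=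
  (((hasDerivAt_id' (x := (0 : ℝ))).const_sub 1).div
    ((hasDerivAt_id' (x := (0 : ℝ))).const_add 1) (by norm_num)).congr_deriv (by norm_num)

theorem hasDerivAt_decimated_flip_probability_zero (b : ℕ) :
    HasDerivAt (fun k : ℝ => 1 / 2 * (1 - ((1 - k) / (1 + k)) ^ b)) b 0 :=
  (((hasDerivAt_one_sub_div_one_add_zero.pow b).const_sub 1).const_mul (1 / 2 : ℝ)).congr_deriv
    (by norm_num; ring)

theorem hasDerivAt_div_one_sub_self_zero :
    HasDerivAt (fun x : ℝ => x / (1 - x)) 1 0 :=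
  ((hasDerivAt_id' (x := (0 : ℝ))).div ((hasDerivAt_id' (x := (0 : ℝ))).const_sub 1)
    (by norm_num)).congr_deriv (by norm_num)

theorem renormalized_boltzmann_derivative_general (b : ℕ) :
    ((1 / 2 : ℝ) * (1 - ((1 - 0) / (1 + 0)) ^ b)) /
        (1 - (1 / 2 : ℝ) * (1 - ((1 - 0) / (1 + 0)) ^ b)) = 0 ∧
    HasDerivWithinAt
      (fun k : ℝ =>
        ((1 / 2) * (1 - ((1 - k) / (1 + k)) ^ b)) /
          (1 - (1 / 2) * (1 - ((1 - k) / (1 + k)) ^ b)))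
      (b : ℝ) (Set.Ico 0 1) 0 ∧
    (∀ k : ℝ, k ∈ Set.Ico (0 : ℝ) 1 →
      ((1 / 2) * (1 - (1 - 2 * (k / (1 + k))) ^ b)) /
          (1 - (1 / 2) * (1 - (1 - 2 * (k / (1 + k))) ^ b)) =
        ((1 / 2) * (1 - ((1 - k) / (1 + k)) ^ b)) /
          (1 - (1 / 2) * (1 - ((1 - k) / (1 + k)) ^ b))) := by
  refine ⟨by norm_num, ?_, fun k hk => ?_⟩
  · have hφ := hasDerivAt_div_one_sub_self_zero.comp_of_eq 0
      (hasDerivAt_decimated_flip_probability_zero b) (by norm_num)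
    rw [one_mul] at hφ
    exact hφ.hasDerivWithinAt
  · rw [one_sub_two_mul_div_one_add (by linarith [hk.1])]

/-- **Derivative of the renormalized Boltzmann factor at the fixed point.**  For a
blocking factor `b ≥ 2`, the function `φ(k) = p'/(1 − p')` with
`p' = (1/2)(1 − ((1−k)/(1+k))^b)`, defined for `0 ≤ k < 1`, satisfies `φ(0) = 0` and
has derivative `b` at `k = 0` (derivative within `[0,1)`).  Equivalently, the
composite `k ↦ p = k/(1+k) ↦ p' = (1/2)(1 − (1−2p)^b) ↦ k' = p'/(1−p')` (which
coincides with `φ` on `[0,1)`) carries the fixed point `0` to `0` with derivative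
equal to the blocking factor `b`. -/
theorem renormalized_boltzmann_derivative (b : ℕ) (hb : 2 ≤ b) :
    ((1 / 2 : ℝ) * (1 - ((1 - 0) / (1 + 0)) ^ b)) /
        (1 - (1 / 2 : ℝ) * (1 - ((1 - 0) / (1 + 0)) ^ b)) = 0 ∧
    HasDerivWithinAt
      (fun k : ℝ =>
        ((1 / 2) * (1 - ((1 - k) / (1 + k)) ^ b)) /
          (1 - (1 / 2) * (1 - ((1 - k) / (1 + k)) ^ b)))
      (b : ℝ) (Set.Ico 0 1) 0 ∧
    (∀ k : ℝ, k ∈ Set.Ico (0 : ℝ) 1 →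
      ((1 / 2) * (1 - (1 - 2 * (k / (1 + k))) ^ b)) /
          (1 - (1 / 2) * (1 - (1 - 2 * (k / (1 + k))) ^ b)) =
        ((1 / 2) * (1 - ((1 - k) / (1 + k)) ^ b)) /
          (1 - (1 / 2) * (1 - ((1 - k) / (1 + k)) ^ b))) :=
  renormalized_boltzmann_derivative_general b
end
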